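/- arXiv:2602.00988 — 11 statements merged into one kernel-verified Lean document; each statement's English description precedes it below -/
import Mathlib

section
/- Let a, b, μ be natural numbers with a < μ < b, and let p ∈ V_μ (so that in particular ∑_{n≥0} p_n = 1 and ∑_{n≥0} n·p_n = μ converge). Then the series ∑_{n≥0} n·L[p]_n converges and ∑_{n≥0} n·L[p]_n = 0 (conservation of the mean value). -/
open scoped BigOperators

/-- `lamr b p = ∑_{ℓ=0}^{b-1} p_ℓ`, the proportion of receivers. -/
noncomputable def lamr (b : ℕ) (p : ℕ → ℝ) : ℝ := ∑ ℓ ∈ Finset.range b, p ℓ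

/-- `lamg a p = ∑_{ℓ≥a+1} p_ℓ`, the proportion of givers. -/
noncomputable def lamg (a : ℕ) (p : ℕ → ℝ) : ℝ := ∑' ℓ : ℕ, if a + 1 ≤ ℓ then p ℓ else 0

/-- The mean-field operator `L[p]_n`. -/
noncomputable def Lop (a b : ℕ) (p : ℕ → ℝ) (n : ℕ) : ℝ :=
  lamr b p * ((if a ≤ n then p (n + 1) else 0) - (if a + 1 ≤ n then p n else 0))
    + lamg a p * ((if 1 ≤ n ∧ n ≤ b then p (n - 1) else 0) - (if n ≤ b - 1 then p n else 0))

/-- `V_μ`: probability mass functions on ℕ with mean `μ`. -/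
def memV (μ : ℕ) (p : ℕ → ℝ) : Prop :=
  (∀ n, 0 ≤ p n) ∧ HasSum p 1 ∧ HasSum (fun n : ℕ => (n : ℝ) * p n) (μ : ℝ)


/-! Both halves of `L` are forward differences (up to sign) of a truncation of `p`, and summation
by parts turns the first moment of a forward difference `f (n + 1) - f n` into the boundary term
`f 0 - ∑ f`. The receiver half thus contributes `λ_r · (-λ_g)` and the giver half `λ_g · λ_r`. -/

theorem hasSum_natCast_mul_succ_sub {f : ℕ → ℝ} {s : ℝ} (hf : HasSum f s)
    (hnf : Summable fun n : ℕ => (n : ℝ) * f n) :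
    HasSum (fun n : ℕ => (n : ℝ) * (f (n + 1) - f n)) (f 0 - s) := by
  have hmoment : HasSum (fun n : ℕ => ((n + 1 : ℕ) : ℝ) * f (n + 1)) (∑' n : ℕ, (n : ℝ) * f n) := by
    simpa using (hasSum_nat_add_iff' 1).mpr hnf.hasSum
  have htail : HasSum (fun n => f (n + 1)) (s - f 0) := by
    simpa using (hasSum_nat_add_iff' 1).mpr hf
  have h := (hmoment.sub htail).sub hnf.hasSum
  rw [show ∑' n : ℕ, (n : ℝ) * f n - (s - f 0) - ∑' n : ℕ, (n : ℝ) * f n = f 0 - s by ring] at h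
  refine h.congr_fun fun n => ?_
  push_cast
  ring

namespace Lop

variable {a b : ℕ} {p : ℕ → ℝ}

def tail (a : ℕ) (p : ℕ → ℝ) (n : ℕ) : ℝ := if a + 1 ≤ n then p n else 0

def shiftedHead (b : ℕ) (p : ℕ → ℝ) (n : ℕ) : ℝ := if 1 ≤ n ∧ n ≤ b then p (n - 1) else 0

theorem natCast_mul_eq (n : ℕ) :
    (n : ℝ) * Lop a b p n =
      lamr b p * ((n : ℝ) * (tail a p (n + 1) - tail a p n))
        + lamg a p * -((n : ℝ) * (shiftedHead b p (n + 1) - shiftedHead b p n)) := by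
  -- `n ≤ b - 1` and `n + 1 ≤ b` differ only at `n = b = 0`, where the factor `n` vanishes.
  rcases n.eq_zero_or_pos with rfl | hn
  · simp
  · simp only [Lop, tail, shiftedHead, Nat.add_sub_cancel]
    split_ifs <;> first | omega | ring

theorem hasSum_shiftedHead : HasSum (shiftedHead b p) (lamr b p) := by
  have hfin : ∀ n ∉ Finset.range (b + 1), shiftedHead b p n = 0 := fun n hn => by
    rw [Finset.mem_range, not_lt] at hn
    exact if_neg (by omega)
  have hsum : ∑ n ∈ Finset.range (b + 1), shiftedHead b p n = lamr b p := by
    rw [Finset.sum_range_succ', lamr]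
    simp only [shiftedHead, Nat.add_sub_cancel]
    rw [if_neg (by omega), add_zero]
    exact Finset.sum_congr rfl fun n hn => if_pos ⟨Nat.le_add_left 1 n, Finset.mem_range.mp hn⟩
  exact hsum ▸ hasSum_sum_of_ne_finset_zero hfin

theorem hasSum_tail (hp : Summable p) : HasSum (tail a p) (lamg a p) :=
  (Summable.of_norm_bounded hp.norm fun n => by
    unfold tail
    split_ifs <;> simp only [norm_zero, norm_nonneg, le_refl]).hasSum

theorem summable_natCast_mul_tail (hnp : Summable fun n : ℕ => (n : ℝ) * p n) :
    Summable fun n : ℕ => (n : ℝ) * tail a p n :=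
  Summable.of_norm_bounded hnp.norm fun n => by
    unfold tail
    split_ifs <;> simp only [mul_zero, norm_zero, norm_nonneg, le_refl]

theorem summable_natCast_mul_shiftedHead :
    Summable fun n : ℕ => (n : ℝ) * shiftedHead b p n :=
  summable_of_ne_finset_zero (s := Finset.range (b + 1)) fun n hn => by
    rw [Finset.mem_range, not_lt] at hn
    rw [shiftedHead, if_neg (by omega), mul_zero]

theorem hasSum_natCast_mul (hp : Summable p) (hnp : Summable fun n : ℕ => (n : ℝ) * p n) :
    HasSum (fun n : ℕ => (n : ℝ) * Lop a b p n) 0 := by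
  have hrecv := hasSum_natCast_mul_succ_sub (hasSum_tail (a := a) hp)
    (summable_natCast_mul_tail hnp)
  have hgive := hasSum_natCast_mul_succ_sub (hasSum_shiftedHead (b := b) (p := p))
    summable_natCast_mul_shiftedHead
  have h := (hrecv.mul_left (lamr b p)).add (hgive.neg.mul_left (lamg a p))
  rw [show lamr b p * (tail a p 0 - lamg a p) + lamg a p * -(shiftedHead b p 0 - lamr b p) = 0 by
    simp [tail, shiftedHead]; ring] at h
  exact h.congr_fun natCast_mul_eq

end Lop

theorem mean_conservation_general (a b μ : ℕ) (p : ℕ → ℝ) (hp : memV μ p) :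
    HasSum (fun n : ℕ => (n : ℝ) * Lop a b p n) 0 :=
  Lop.hasSum_natCast_mul hp.2.1.summable hp.2.2.summable

theorem mean_conservation (a b μ : ℕ) (hau : a < μ) (hub : μ < b) (p : ℕ → ℝ)
    (hp : memV μ p) :
    HasSum (fun n : ℕ => (n : ℝ) * Lop a b p n) 0 :=
  mean_conservation_general a b μ p hp
end

section
/- Let a, μ, b be natural numbers with 0 ≤ a < μ < b and suppose 2μ < a + b. Then there exists a unique x in the open interval (0,1) such that f(x) = 0. -/
/-! With `c = b - μ`, `d = μ - a` and `m = b - a`, one has `f(x) = (x - 1) g(x)` for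
`g(x) = c x^(m+1) + d - (x + x² + ⋯ + x^m)`, and `g(1) = c + d - m = 0`.
Since `g(0) = d > 0` and `g'(1) = (m + 1)(c - d)/2 > 0` (as `2μ < a + b` means `d < c`),
`g` is negative just left of `1`, so the intermediate value theorem gives a root in `(0, 1)`.
On `(0, ∞)`, `g'(x) = x^m (c(m+1) - ∑ₖ (k+1)/x^(m-k))` with the bracket strictly increasing,
so `g'` vanishes at most once there; by Rolle, a second root of `g` in `(0, 1)` together with
the root `1` would force two zeros of `g'`. -/

open scoped BigOperators

open Finset Set Topology

/-- The polynomial `f(x) = (b−μ)x^{b+2−a} + (μ−b−1)x^{b+1−a} + (μ−a+1)x + (a−μ)`. -/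
noncomputable def fpoly (a μ b : ℕ) (x : ℝ) : ℝ :=
  ((b : ℝ) - μ) * x ^ (b + 2 - a) + ((μ : ℝ) - b - 1) * x ^ (b + 1 - a)
    + ((μ : ℝ) - a + 1) * x + ((a : ℝ) - μ)

theorem ne_of_hasDerivAt_of_zeros_subsingleton {f f' : ℝ → ℝ} {s : Set ℝ} [s.OrdConnected]
    (hf : ∀ x ∈ s, HasDerivAt f (f' x) x) (hf' : (s ∩ {x | f' x = 0}).Subsingleton)
    {u v w : ℝ} (hu : u ∈ s) (hw : w ∈ s) (huv : u < v) (hvw : v < w) (huv_eq : f u = f v) :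
    f v ≠ f w := by
  intro hvw_eq
  have hIcc : Icc u w ⊆ s := ‹s.OrdConnected›.out hu hw
  have rolle : ∀ p q, u ≤ p → p < q → q ≤ w → f p = f q →
      ∃ c ∈ Ioo p q, c ∈ s ∧ f' c = 0 := by
    intro p q hup hpq hqw hfpq
    have hsub : Icc p q ⊆ s := (Icc_subset_Icc hup hqw).trans hIcc
    obtain ⟨c, hc, hc0⟩ := exists_hasDerivAt_eq_zero hpq
      (continuousOn_of_forall_continuousAt fun x hx => (hf x (hsub hx)).continuousAt) hfpq
      fun x hx => hf x (hsub (Ioo_subset_Icc_self hx))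
    exact ⟨c, hc, hsub (Ioo_subset_Icc_self hc), hc0⟩
  obtain ⟨c₁, hc₁, hc₁s, hc₁0⟩ := rolle u v le_rfl huv hvw.le huv_eq
  obtain ⟨c₂, hc₂, hc₂s, hc₂0⟩ := rolle v w huv.le hvw le_rfl hvw_eq
  exact (hc₁.2.trans hc₂.1).ne (hf' ⟨hc₁s, hc₁0⟩ ⟨hc₂s, hc₂0⟩)

theorem exists_lt_of_hasDerivAt_pos {f : ℝ → ℝ} {f' x a : ℝ} (hf : HasDerivAt f f' x)
    (hf' : 0 < f') (hax : a < x) : ∃ p ∈ Ioo a x, f p < f x := by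
  have hslope : ∀ᶠ p in 𝓝[<] x, 0 < slope f x p :=
    (hasDerivAt_iff_tendsto_slope_left_right.mp hf).1.eventually (eventually_gt_nhds hf')
  obtain ⟨p, hp, hpa⟩ := (hslope.and (Ioo_mem_nhdsLT hax)).exists
  exact ⟨p, hpa, (slope_pos_iff_gt hpa.2).mp hp⟩

noncomputable def reducedPoly (c d : ℝ) (m : ℕ) (x : ℝ) : ℝ :=
  c * x ^ (m + 1) + d - ∑ k ∈ range m, x ^ (k + 1)

noncomputable def reducedPolyDeriv (c : ℝ) (m : ℕ) (x : ℝ) : ℝ :=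
  c * (m + 1) * x ^ m - ∑ k ∈ range m, ((k : ℝ) + 1) * x ^ k

noncomputable def reducedPolyDerivDivPow (c : ℝ) (m : ℕ) (x : ℝ) : ℝ :=
  c * (m + 1) - ∑ k ∈ range m, ((k : ℝ) + 1) / x ^ (m - k)

theorem fpoly_eq_mul_reducedPoly {a μ b : ℕ} (hab : a ≤ b) (x : ℝ) :
    fpoly a μ b x = (x - 1) * reducedPoly ((b : ℝ) - μ) ((μ : ℝ) - a) (b - a) x := by
  have hgeom : (x - 1) * ∑ k ∈ range (b - a), x ^ (k + 1) = x ^ (b - a + 1) - x := by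
    simp_rw [pow_succ, ← sum_mul]
    linear_combination x * geom_sum_mul x (b - a)
  rw [fpoly, reducedPoly, show b + 2 - a = b - a + 2 by omega,
    show b + 1 - a = b - a + 1 by omega]
  linear_combination hgeom

section reducedPoly

variable (c d : ℝ) (m : ℕ)

theorem reducedPoly_zero : reducedPoly c d m 0 = d := by
  simp [reducedPoly]

theorem reducedPoly_one : reducedPoly c d m 1 = c + d - m := by
  simp [reducedPoly]

theorem hasDerivAt_reducedPoly (x : ℝ) :
    HasDerivAt (reducedPoly c d m) (reducedPolyDeriv c m x) x := by
  have hlead := ((hasDerivAt_pow (m + 1) x).const_mul c).add_const d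
  have hsum := HasDerivAt.fun_sum (u := range m) fun k _ => hasDerivAt_pow (k + 1) x
  refine (hlead.fun_sub hsum).congr_deriv ?_
  simp [reducedPolyDeriv, mul_assoc]

theorem reducedPolyDeriv_one : reducedPolyDeriv c m 1 = c * (m + 1) - m * (m + 1) / 2 := by
  have hgauss : ∑ k ∈ range m, ((k : ℝ) + 1) = m * (m + 1) / 2 := by
    induction m with
    | zero => simp
    | succ m ih => rw [sum_range_succ, ih]; push_cast; ring
  simp [reducedPolyDeriv, hgauss]

theorem reducedPolyDeriv_eq_pow_mul {x : ℝ} (hx : 0 < x) :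
    reducedPolyDeriv c m x = x ^ m * reducedPolyDerivDivPow c m x := by
  rw [reducedPolyDeriv, reducedPolyDerivDivPow, mul_sub, mul_sum, mul_comm (x ^ m)]
  congr 1
  refine sum_congr rfl fun k hk => ?_
  rw [← pow_sub_mul_pow x (mem_range.mp hk).le]
  field_simp

theorem strictMonoOn_reducedPolyDerivDivPow (hm : 0 < m) :
    StrictMonoOn (reducedPolyDerivDivPow c m) (Set.Ioi 0) := by
  intro x hx y hy hxy
  have hsum : ∑ k ∈ range m, ((k : ℝ) + 1) / y ^ (m - k)
      < ∑ k ∈ range m, ((k : ℝ) + 1) / x ^ (m - k) :=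
    sum_lt_sum_of_nonempty (nonempty_range_iff.mpr hm.ne') fun k hk =>
      div_lt_div_of_pos_left (by positivity) (pow_pos hx _)
        (pow_lt_pow_left₀ hxy (le_of_lt hx) (Nat.sub_ne_zero_of_lt (mem_range.mp hk)))
  simpa [reducedPolyDerivDivPow] using hsum

theorem reducedPolyDeriv_zeros_subsingleton (hm : 0 < m) :
    (Set.Ioi 0 ∩ {x | reducedPolyDeriv c m x = 0}).Subsingleton := by
  have hdiv : ∀ x ∈ Set.Ioi (0 : ℝ), reducedPolyDeriv c m x = 0 →
      reducedPolyDerivDivPow c m x = 0 := fun x hx h =>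
    (mul_eq_zero.mp ((reducedPolyDeriv_eq_pow_mul c m hx).symm.trans h)).resolve_left
      (pow_ne_zero _ (ne_of_gt hx))
  rintro x ⟨hx, hx0⟩ y ⟨hy, hy0⟩
  exact (strictMonoOn_reducedPolyDerivDivPow c m hm).injOn hx hy
    ((hdiv x hx hx0).trans (hdiv y hy hy0).symm)

end reducedPoly

theorem existsUnique_reducedPoly_root {c d : ℝ} {m : ℕ} (hd : 0 < d) (hdc : d < c)
    (hm : c + d = m) : ∃! x, x ∈ Ioo (0 : ℝ) 1 ∧ reducedPoly c d m x = 0 := by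
  have hg : ∀ x, HasDerivAt (reducedPoly c d m) (reducedPolyDeriv c m x) x :=
    hasDerivAt_reducedPoly c d m
  have hg1 : reducedPoly c d m 1 = 0 := by rw [reducedPoly_one, ← hm]; ring
  have hg'1 : 0 < reducedPolyDeriv c m 1 := by
    rw [reducedPolyDeriv_one, ← hm]
    nlinarith [mul_pos (by linarith : 0 < c + d + 1) (sub_pos.mpr hdc)]
  obtain ⟨p, hp, hgp⟩ := exists_lt_of_hasDerivAt_pos (hg 1) hg'1 zero_lt_one
  have hcont : ContinuousOn (reducedPoly c d m) (Icc 0 p) :=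
    continuousOn_of_forall_continuousAt fun x _ => (hg x).continuousAt
  obtain ⟨x, hx, hgx⟩ := intermediate_value_Ioo' hp.1.le hcont
    ⟨hg1 ▸ hgp, (reducedPoly_zero c d m).symm ▸ hd⟩
  have hm0 : 0 < m := by exact_mod_cast (hm ▸ by linarith : (0 : ℝ) < m)
  have hnot_lt : ∀ u ∈ Ioo (0 : ℝ) 1, ∀ v ∈ Ioo (0 : ℝ) 1,
      reducedPoly c d m u = 0 → reducedPoly c d m v = 0 → ¬ u < v :=
    fun u hu v hv hgu hgv huv =>
      ne_of_hasDerivAt_of_zeros_subsingleton (s := Ioi 0) (fun x _ => hg x)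
        (reducedPolyDeriv_zeros_subsingleton c m hm0) hu.1 (mem_Ioi.mpr one_pos) huv hv.2
        (hgu.trans hgv.symm) (hgv.trans hg1.symm)
  have hx01 : x ∈ Ioo (0 : ℝ) 1 := ⟨hx.1, hx.2.trans hp.2⟩
  exact ⟨x, ⟨hx01, hgx⟩, fun y ⟨hy, hgy⟩ =>
    le_antisymm (not_lt.mp (hnot_lt x hx01 y hy hgx hgy))
      (not_lt.mp (hnot_lt y hy x hx01 hgy hgx))⟩

theorem unique_root_in_unit_interval_general (a μ b : ℕ) (hau : a < μ)
    (hmean : 2 * μ < a + b) :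
    ∃! x : ℝ, x ∈ Set.Ioo (0 : ℝ) 1 ∧ fpoly a μ b x = 0 := by
  have hab : a ≤ b := by omega
  have hd : (0 : ℝ) < μ - a := sub_pos.mpr (by exact_mod_cast hau)
  have hdc : (μ : ℝ) - a < b - μ := by
    have : (2 * μ : ℝ) < a + b := by exact_mod_cast hmean
    linarith
  have hm : ((b : ℝ) - μ) + (μ - a) = (b - a : ℕ) := by push_cast [Nat.cast_sub hab]; ring
  refine (existsUnique_congr fun x => and_congr_right fun hx => ?_).mpr
    (existsUnique_reducedPoly_root hd hdc hm)
  rw [fpoly_eq_mul_reducedPoly hab, mul_eq_zero, sub_eq_zero, or_iff_right hx.2.ne]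

theorem unique_root_in_unit_interval (a μ b : ℕ) (hau : a < μ) (hub : μ < b)
    (hmean : 2 * μ < a + b) :
    ∃! x : ℝ, x ∈ Set.Ioo (0 : ℝ) 1 ∧ fpoly a μ b x = 0 :=
  unique_root_in_unit_interval_general a μ b hau hmean
end

section
/- Let a, μ, b be natural numbers with 0 ≤ a < μ < b and suppose 2μ = a + b. Then for every real x > 0, f(x) = 0 if and only if x = 1; that is, x = 1 is the unique positive root of f. -/
/-!
With `μ = a + m` and `b = a + 2m`, the polynomial factors as
`f(x) = (x - 1) (m (1 + x^(2m+1)) - ∑_{i=1}^{2m} x^i)`.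
For `0 < x ≠ 1` the second factor is positive: pairing `x^i` with `x^(2m+1-i)`,
each pair satisfies `x^i + x^(2m+1-i) < 1 + x^(2m+1)`, since `(1 - x^i)(1 - x^(2m+1-i)) > 0`.
-/

open scoped BigOperators

open Finset

lemma pow_add_pow_lt_one_add_pow {x : ℝ} (hx : 0 < x) (hx1 : x ≠ 1) {j k : ℕ}
    (hj : j ≠ 0) (hk : k ≠ 0) : x ^ j + x ^ k < 1 + x ^ (j + k) := by
  have hprod : 0 < (1 - x ^ j) * (1 - x ^ k) := by
    rcases hx1.lt_or_gt with h | h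
    · exact mul_pos (sub_pos.2 (pow_lt_one₀ hx.le h hj)) (sub_pos.2 (pow_lt_one₀ hx.le h hk))
    · exact mul_pos_of_neg_of_neg (sub_neg.2 (one_lt_pow₀ h hj)) (sub_neg.2 (one_lt_pow₀ h hk))
  rw [pow_add]
  linarith

lemma two_mul_sum_pow_succ_lt {x : ℝ} (hx : 0 < x) (hx1 : x ≠ 1) {n : ℕ} (hn : n ≠ 0) :
    2 * ∑ i ∈ range n, x ^ (i + 1) < n * (1 + x ^ (n + 1)) := by
  have hreflect : ∑ i ∈ range n, x ^ (i + 1) = ∑ i ∈ range n, x ^ (n - i) := by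
    rw [← sum_range_reflect]
    refine sum_congr rfl fun i hi => ?_
    rw [mem_range] at hi
    congr 1
    omega
  calc 2 * ∑ i ∈ range n, x ^ (i + 1)
      = ∑ i ∈ range n, (x ^ (i + 1) + x ^ (n - i)) := by
        rw [sum_add_distrib, ← hreflect, two_mul]
    _ < ∑ _i ∈ range n, (1 + x ^ (n + 1)) := by
        refine sum_lt_sum_of_nonempty (nonempty_range_iff.2 hn) fun i hi => ?_
        have hi : i < n := mem_range.1 hi
        have hexp : i + 1 + (n - i) = n + 1 := by omega
        simpa only [hexp] using
          pow_add_pow_lt_one_add_pow hx hx1 (Nat.succ_ne_zero i) (Nat.sub_ne_zero_of_lt hi)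
    _ = n * (1 + x ^ (n + 1)) := by
        rw [sum_const, card_range, nsmul_eq_mul]

lemma fpoly_eq_mul (a m : ℕ) (x : ℝ) :
    fpoly a (a + m) (a + 2 * m) x
      = (x - 1) * (m * (1 + x ^ (2 * m + 1)) - ∑ i ∈ range (2 * m), x ^ (i + 1)) := by
  have hgeom : (∑ i ∈ range (2 * m), x ^ i) * (x - 1) = x ^ (2 * m) - 1 := geom_sum_mul x _
  have hshift : ∑ i ∈ range (2 * m), x ^ (i + 1) = x * ∑ i ∈ range (2 * m), x ^ i := by
    rw [mul_sum]
    exact sum_congr rfl fun i _ => pow_succ' x i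
  rw [fpoly, hshift, show a + 2 * m + 2 - a = 2 * m + 2 by omega,
    show a + 2 * m + 1 - a = 2 * m + 1 by omega]
  push_cast
  linear_combination x * hgeom

theorem unique_root_at_one_general (a μ b : ℕ) (hau : a < μ)
    (hmean : 2 * μ = a + b) :
    ∀ x : ℝ, 0 < x → (fpoly a μ b x = 0 ↔ x = 1) := by
  obtain ⟨m, rfl, rfl⟩ : ∃ m, μ = a + m ∧ b = a + 2 * m := ⟨μ - a, by omega, by omega⟩
  intro x hx
  rw [fpoly_eq_mul, mul_eq_zero, sub_eq_zero, sub_eq_zero, or_iff_left_iff_imp]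
  intro hzero
  by_contra hx1
  have hlt := two_mul_sum_pow_succ_lt hx hx1 (n := 2 * m) (by omega)
  push_cast at hlt
  linarith

theorem unique_root_at_one (a μ b : ℕ) (hau : a < μ) (hub : μ < b)
    (hmean : 2 * μ = a + b) :
    ∀ x : ℝ, 0 < x → (fpoly a μ b x = 0 ↔ x = 1) :=
  unique_root_at_one_general a μ b hau hmean
end

section
/- Let a, μ, b be natural numbers with 0 ≤ a < μ < b and suppose 2μ > a + b. Then there exists a unique x in the open interval (1,∞) such that f(x) = 0. -/
open scoped BigOperators

/-!
With `c = μ - a` and `d = b - a` one has `f(x) = (x - 1)² · x^c · g(x)` where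
`g(x) = ∑_{j=0}^{d} (j - c) x^{j - c}` is `cofactor c d`. Each term `k x^k` of `g` is nondecreasing on `(0, ∞)`,
strictly so for `k = d - c > 0`, so `g` is strictly increasing there and has at most one zero.
Since `g(1) = (d + 1)(d - 2c)/2 < 0` (this is `2μ > a + b`) and `g` grows at least like `x`,
the intermediate value theorem provides a zero in `(1, ∞)`.
-/

open Finset Set

section TermMonotone

variable {K : Type*} [Field K] [LinearOrder K] [IsStrictOrderedRing K] {x y : K}

lemma intCast_mul_zpow_le_of_le (k : ℤ) (hx : 0 < x) (hxy : x ≤ y) :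
    (k : K) * x ^ k ≤ k * y ^ k := by
  rcases le_or_gt 0 k with hk | hk
  · exact mul_le_mul_of_nonneg_left (zpow_le_zpow_left₀ hk hx.le hxy) (Int.cast_nonneg hk)
  · refine mul_le_mul_of_nonpos_left ?_ (Int.cast_nonpos.2 hk.le)
    simpa only [zpow_neg, inv_inv] using
      inv_anti₀ (zpow_pos hx (-k)) (zpow_le_zpow_left₀ (neg_nonneg.2 hk.le) hx.le hxy)

lemma intCast_mul_zpow_lt_of_lt {k : ℤ} (hk : 0 < k) (hx : 0 < x) (hxy : x < y) :
    (k : K) * x ^ k < k * y ^ k :=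
  mul_lt_mul_of_pos_left (zpow_lt_zpow_left₀ hk hx.le hxy) (Int.cast_pos.2 hk)

end TermMonotone

noncomputable def cofactor (c d : ℕ) (x : ℝ) : ℝ :=
  ∑ j ∈ range (d + 1), ((j - c : ℤ) : ℝ) * x ^ (j - c : ℤ)

lemma sq_sub_one_mul_sum_range (d : ℕ) (C x : ℝ) :
    (x - 1) ^ 2 * ∑ j ∈ range (d + 1), ((j : ℝ) - C) * x ^ j
      = ((d : ℝ) - C) * x ^ (d + 2) + (C - d - 1) * x ^ (d + 1) + (C + 1) * x - C := by
  induction d with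
  | zero => rw [zero_add, range_one, sum_singleton]; push_cast; ring
  | succ n ih => rw [sum_range_succ, mul_add, ih]; push_cast; ring

lemma fpoly_eq_mul_cofactor {a μ b : ℕ} (haμ : a ≤ μ) (hab : a ≤ b) {x : ℝ} (hx : x ≠ 0) :
    fpoly a μ b x = (x - 1) ^ 2 * x ^ (μ - a) * cofactor (μ - a) (b - a) x := by
  have hsum : x ^ (μ - a) * cofactor (μ - a) (b - a) x
      = ∑ j ∈ range (b - a + 1), ((j : ℝ) - (μ - a : ℕ)) * x ^ j := by
    rw [cofactor, mul_sum]
    refine sum_congr rfl fun j _ => ?_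
    rw [← zpow_natCast, mul_left_comm, ← zpow_add₀ hx]
    push_cast
    simp
  rw [mul_assoc, hsum, sq_sub_one_mul_sum_range, fpoly, show b + 2 - a = b - a + 2 by omega,
    show b + 1 - a = b - a + 1 by omega]
  push_cast [Nat.cast_sub hab, Nat.cast_sub haμ]
  ring

variable {c d : ℕ}

lemma continuousOn_cofactor : ContinuousOn (cofactor c d) {0}ᶜ :=
  continuousOn_finsetSum _ fun _ _ => continuousOn_const.mul (continuousOn_zpow₀ _)

lemma strictMonoOn_cofactor (hcd : c < d) : StrictMonoOn (cofactor c d) (Ioi 0) :=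
  fun x hx _ _ hxy => sum_lt_sum (fun j _ => intCast_mul_zpow_le_of_le _ hx hxy.le)
    ⟨d, self_mem_range_succ d, intCast_mul_zpow_lt_of_lt (by omega) hx hxy⟩

lemma cofactor_one (c d : ℕ) : cofactor c d 1 = (d + 1) * (d - 2 * c) / 2 := by
  induction d with
  | zero => simp only [cofactor, zero_add, range_one, sum_singleton, one_zpow]; push_cast; ring
  | succ n ih =>
    simp only [cofactor, one_zpow, mul_one] at ih ⊢
    rw [sum_range_succ, ih]
    push_cast
    ring

lemma cofactor_one_add_sub_one_le (hcd : c < d) {x : ℝ} (hx : 1 ≤ x) :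
    cofactor c d 1 + (x - 1) ≤ cofactor c d x := by
  obtain ⟨n, hn⟩ : ∃ n : ℕ, (d - c : ℤ) = n + 1 := ⟨d - c - 1, by omega⟩
  have htop : ((d - c : ℤ) : ℝ) * 1 ^ (d - c : ℤ) + (x - 1)
      ≤ ((d - c : ℤ) : ℝ) * x ^ (d - c : ℤ) := by
    rw [hn, one_zpow, show (n + 1 : ℤ) = (n + 1 : ℕ) by push_cast; ring, zpow_natCast]
    have hxn : x ≤ x ^ (n + 1) := le_self_pow₀ hx (by omega)
    push_cast
    nlinarith [n.cast_nonneg (α := ℝ)]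
  have hrest := sum_le_sum fun j (_ : j ∈ range d) =>
    intCast_mul_zpow_le_of_le ((j : ℤ) - c) one_pos hx
  simp only [cofactor, sum_range_succ] at hrest ⊢
  linarith

lemma exists_cofactor_eq_zero (hcd : c < d) (hd : d < 2 * c) :
    ∃ x, 1 < x ∧ cofactor c d x = 0 := by
  have hneg : cofactor c d 1 < 0 := by
    rw [cofactor_one]
    have : (d : ℝ) < 2 * c := by exact_mod_cast hd
    nlinarith
  set X := 2 - cofactor c d 1
  have hX : 1 ≤ X := by linarith
  have hpos : 0 < cofactor c d X := by linarith [cofactor_one_add_sub_one_le hcd hX]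
  have hcont : ContinuousOn (cofactor c d) (Icc 1 X) :=
    continuousOn_cofactor.mono fun y hy => mem_compl_singleton_iff.2 (one_pos.trans_le hy.1).ne'
  obtain ⟨x, hx, hx0⟩ := intermediate_value_Ioo hX hcont ⟨hneg, hpos⟩
  exact ⟨x, hx.1, hx0⟩

theorem unique_root_above_one (a μ b : ℕ) (hau : a < μ) (hub : μ < b)
    (hmean : 2 * μ > a + b) :
    ∃! x : ℝ, x ∈ Set.Ioi (1 : ℝ) ∧ fpoly a μ b x = 0 := by
  have hroot : ∀ x : ℝ, 1 < x → (fpoly a μ b x = 0 ↔ cofactor (μ - a) (b - a) x = 0) := by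
    intro x hx
    have hx1 : x - 1 ≠ 0 := by linarith
    rw [fpoly_eq_mul_cofactor hau.le (hau.trans hub).le (by positivity)]
    simp [hx1, (by positivity : x ≠ 0)]
  obtain ⟨x, hx, hx0⟩ := exists_cofactor_eq_zero (c := μ - a) (d := b - a) (by omega) (by omega)
  refine ⟨x, ⟨hx, (hroot x hx).2 hx0⟩, fun y ⟨hy, hy0⟩ => ?_⟩
  exact (strictMonoOn_cofactor (by omega)).injOn (mem_Ioi.2 (one_pos.trans hy))
    (mem_Ioi.2 (one_pos.trans hx)) (((hroot y hy).1 hy0).trans hx0.symm)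
end

section
/- Let a, μ, b be natural numbers with 0 ≤ a < μ < b, and define g : ℝ → ℝ by g(x) = x^{μ−a} · ∑_{ℓ=1}^{b−μ} ℓ·x^ℓ − ∑_{ℓ=1}^{μ−a} (1 + x + ⋯ + x^{ℓ−1}). Then for every real x, f(x) = (x−1)²·g(x). In particular, x = 1 is always a root of f of multiplicity at least 2. -/
/-! Multiplying by `(x - 1)²` turns both sums in `g` into closed forms, and these combine
to `f` once the exponents are written as `μ - a = m`, `b - μ = n`. -/

open scoped BigOperators

section ClosedForms

variable {R : Type*} [CommRing R] (x : R)

theorem sq_sub_one_mul_sum_Icc_mul_pow (n : ℕ) :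
    (x - 1) ^ 2 * ∑ ℓ ∈ Finset.Icc 1 n, (ℓ : R) * x ^ ℓ
      = n * x ^ (n + 2) - (n + 1) * x ^ (n + 1) + x := by
  induction n with
  | zero => simp
  | succ n ih =>
    rw [Finset.sum_Icc_succ_top (Nat.le_add_left 1 n), mul_add, ih]
    push_cast
    ring

theorem sq_sub_one_mul_sum_Icc_geom_sum (m : ℕ) :
    (x - 1) ^ 2 * ∑ ℓ ∈ Finset.Icc 1 m, ∑ j ∈ Finset.range ℓ, x ^ j
      = x * (x ^ m - 1) - m * (x - 1) := by
  induction m with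
  | zero => simp
  | succ m ih =>
    have geom : (x - 1) ^ 2 * ∑ j ∈ Finset.range (m + 1), x ^ j
        = (x - 1) * (x ^ (m + 1) - 1) := by
      rw [← geom_sum_mul x (m + 1)]; ring
    rw [Finset.sum_Icc_succ_top (Nat.le_add_left 1 m), mul_add, ih, geom]
    push_cast
    ring

end ClosedForms

theorem fpoly_factorization (a μ b : ℕ) (hau : a < μ) (hub : μ < b) :
    ∀ x : ℝ,
      fpoly a μ b x =
        (x - 1) ^ 2 *
          (x ^ (μ - a) * ∑ ℓ ∈ Finset.Icc 1 (b - μ), (ℓ : ℝ) * x ^ ℓ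
            - ∑ ℓ ∈ Finset.Icc 1 (μ - a), ∑ j ∈ Finset.range ℓ, x ^ j) := by
  intro x
  obtain ⟨m, rfl⟩ := Nat.exists_eq_add_of_le hau.le
  obtain ⟨n, rfl⟩ := Nat.exists_eq_add_of_le hub.le
  rw [mul_sub, mul_left_comm, sq_sub_one_mul_sum_Icc_mul_pow, sq_sub_one_mul_sum_Icc_geom_sum]
  simp only [fpoly, Nat.add_sub_cancel_left, show a + m + n + 2 - a = m + n + 2 by omega,
    show a + m + n + 1 - a = m + n + 1 by omega]
  push_cast
  ring
end

section
/- Let a, μ, b be natural numbers with 0 ≤ a < μ < b, and let r̄ > 0 be a real number with r̄ ≠ 1 and f(r̄) = 0. Define the sequence p* by p*_n = 0 for n < a, p*_n = r̄^{n−a}·(1−r̄)/(1−r̄^{b+1−a}) for a ≤ n ≤ b, and p*_n = 0 for n > b. Then p* ∈ V_μ (i.e., p*_n ≥ 0 for all n, ∑_{n≥0} p*_n = 1, and ∑_{n≥0} n·p*_n = μ), and p* is an equilibrium of the mean-field dynamics: L[p*]_n = 0 for every n ∈ ℕ. -/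
open scoped BigOperators

/-- The truncated geometric-type candidate equilibrium with common ratio `r`. -/
noncomputable def pstar (a b : ℕ) (r : ℝ) (n : ℕ) : ℝ :=
  if n < a then 0
  else if n ≤ b then r ^ (n - a) * (1 - r) / (1 - r ^ (b + 1 - a))
  else 0

/-!
On `[a, b]` the candidate is geometric, `p*_{a+i} = r^i / ∑_{j ≤ b-a} r^j`, so it is a
probability vector, and `(1 - r)^2 ∑_{i ≤ b-a} (a + i - μ) r^i = f(r)`, so its mean is `μ`
exactly when `f(r) = 0`. Being geometric on its support also gives `λ_g = r λ_r`, hence the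
detailed-balance relations `λ_r p*_{n+1} = λ_g p*_n` for `a ≤ n < b`, and these make every
component of `L[p*]` vanish.
-/

open Finset

section Dynamics

variable {a b : ℕ} {p : ℕ → ℝ}

lemma lamr_eq_sum_Ico (hlow : ∀ n < a, p n = 0) : lamr b p = ∑ n ∈ Ico a b, p n := by
  rw [lamr, ← Nat.Ico_zero_eq_range]
  refine (sum_subset (Ico_subset_Ico_left (Nat.zero_le a)) fun n hn hn' => hlow n ?_).symm
  simp only [mem_Ico] at hn hn'
  omega

lemma lamg_eq_sum_Icc (hhigh : ∀ n > b, p n = 0) : lamg a p = ∑ n ∈ Icc (a + 1) b, p n := by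
  rw [lamg, tsum_eq_sum (s := Icc (a + 1) b)]
  · exact sum_congr rfl fun n hn => if_pos (mem_Icc.1 hn).1
  · intro n hn
    split_ifs with h
    · exact hhigh n (by simp only [mem_Icc, not_and, not_le] at hn; exact hn h)
    · rfl

lemma lamg_eq_mul_lamr (r : ℝ) (hlow : ∀ n < a, p n = 0) (hhigh : ∀ n > b, p n = 0)
    (hstep : ∀ n, a ≤ n → n < b → p (n + 1) = r * p n) : lamg a p = r * lamr b p := by
  rw [lamg_eq_sum_Icc hhigh, lamr_eq_sum_Ico hlow, mul_sum, ← Ico_add_one_right_eq_Icc,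
    ← sum_Ico_add' p]
  exact sum_congr rfl fun n hn => hstep n (mem_Ico.1 hn).1 (mem_Ico.1 hn).2

lemma Lop_eq_zero_of_balance (hab : a < b) (hlow : ∀ n < a, p n = 0) (hhigh : ∀ n > b, p n = 0)
    (hbal : ∀ n, a ≤ n → n < b → lamr b p * p (n + 1) = lamg a p * p n) (n : ℕ) :
    Lop a b p n = 0 := by
  unfold Lop
  rcases lt_or_ge n a with hna | hna
  · simp [hlow n hna, hlow (n - 1) (by omega), not_le.2 hna]
  rcases lt_or_ge b n with hbn | hbn
  · simp [hhigh n hbn, hhigh (n + 1) (by omega), not_le.2 hbn, show ¬n ≤ b - 1 by omega]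
  have hbal_pred : ∀ m, a < m → m ≤ b → lamr b p * p m = lamg a p * p (m - 1) := fun m _ _ => by
    simpa [Nat.sub_add_cancel (by omega : 1 ≤ m)] using hbal (m - 1) (by omega) (by omega)
  rcases hna.eq_or_lt with rfl | hna
  · have hinflow : (if 1 ≤ a ∧ a ≤ b then p (a - 1) else 0) = 0 :=
      ite_eq_right_iff.2 fun h => hlow _ (by omega)
    rw [hinflow, if_pos le_rfl, if_neg (by omega), if_pos (by omega)]
    linear_combination hbal a le_rfl hab
  rcases hbn.lt_or_eq with hbn | rfl
  · rw [if_pos hna.le, if_pos (show a + 1 ≤ n from hna), if_pos ⟨by omega, hbn.le⟩,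
      if_pos (by omega)]
    linear_combination hbal n hna.le hbn - hbal_pred n hna hbn.le
  · rw [if_pos hna.le, if_pos (show a + 1 ≤ n from hna), if_pos ⟨by omega, le_rfl⟩,
      if_neg (by omega), hhigh _ (by omega)]
    linear_combination -hbal_pred n hna le_rfl

end Dynamics

section Candidate

variable {a b : ℕ} {r : ℝ}

lemma pstar_of_lt {n : ℕ} (hn : n < a) : pstar a b r n = 0 := if_pos hn

lemma pstar_of_gt {n : ℕ} (hn : b < n) : pstar a b r n = 0 := by
  simp [pstar, not_le.2 hn]

lemma pstar_eq_zero_of_notMem {n : ℕ} (hn : n ∉ Icc a b) : pstar a b r n = 0 := by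
  rcases not_and_or.1 (mem_Icc.not.1 hn) with h | h
  exacts [pstar_of_lt (not_le.1 h), pstar_of_gt (not_le.1 h)]

lemma pstar_succ {n : ℕ} (han : a ≤ n) (hnb : n < b) :
    pstar a b r (n + 1) = r * pstar a b r n := by
  rw [pstar, pstar, if_neg (by omega), if_pos (show n + 1 ≤ b from hnb), if_neg (by omega),
    if_pos hnb.le, Nat.sub_add_comm han, pow_succ]
  ring

lemma pstar_add_eq_div_geom_sum (hr1 : r ≠ 1) {i : ℕ} (hi : a + i ≤ b) :
    pstar a b r (a + i) = r ^ i / ∑ j ∈ range (b + 1 - a), r ^ j := by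
  rw [pstar, if_neg (by omega), if_pos hi, Nat.add_sub_cancel_left, geom_sum_eq hr1,
    div_div_eq_mul_div, ← neg_sub r, ← neg_sub (r ^ _), mul_neg, neg_div_neg_eq]

lemma pstar_nonneg (hr : 0 ≤ r) (hr1 : r ≠ 1) (n : ℕ) : 0 ≤ pstar a b r n := by
  by_cases hn : n ∈ Icc a b
  · obtain ⟨i, rfl⟩ := Nat.exists_eq_add_of_le (mem_Icc.1 hn).1
    rw [pstar_add_eq_div_geom_sum hr1 (mem_Icc.1 hn).2]
    positivity
  · rw [pstar_eq_zero_of_notMem hn]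

lemma sum_Icc_mul_pstar (hr1 : r ≠ 1) (g : ℕ → ℝ) :
    ∑ n ∈ Icc a b, g n * pstar a b r n
      = (∑ i ∈ range (b + 1 - a), g (a + i) * r ^ i) / ∑ j ∈ range (b + 1 - a), r ^ j := by
  rw [← Ico_add_one_right_eq_Icc, sum_Ico_eq_sum_range, sum_div]
  refine sum_congr rfl fun i hi => ?_
  rw [pstar_add_eq_div_geom_sum hr1 (by rw [mem_range] at hi; omega), mul_div_assoc]

lemma sq_one_sub_mul_sum_range_add_mul_pow (c x : ℝ) (k : ℕ) :
    (1 - x) ^ 2 * ∑ i ∈ range k, ((i : ℝ) + c) * x ^ i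
      = ((k : ℝ) - 1 + c) * x ^ (k + 1) - (k + c) * x ^ k + (1 - c) * x + c := by
  induction k with
  | zero => simp; ring
  | succ k ih => rw [sum_range_succ, mul_add, ih]; push_cast; ring

lemma fpoly_eq_sq_mul_sum (hab : a ≤ b) (μ : ℕ) (x : ℝ) :
    fpoly a μ b x
      = (1 - x) ^ 2 * ∑ i ∈ range (b + 1 - a), (((a + i : ℕ) : ℝ) - μ) * x ^ i := by
  simp_rw [show ∀ i : ℕ, ((a + i : ℕ) : ℝ) - μ = i + (a - μ) by intro i; push_cast; ring]
  rw [sq_one_sub_mul_sum_range_add_mul_pow, fpoly, show b + 2 - a = b + 1 - a + 1 by omega,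
    Nat.cast_sub (by omega : a ≤ b + 1)]
  push_cast
  ring

theorem pstar_memV {μ : ℕ} (hab : a ≤ b) (hr : 0 ≤ r) (hr1 : r ≠ 1)
    (hroot : fpoly a μ b r = 0) : memV μ (pstar a b r) := by
  have hS : ∑ j ∈ range (b + 1 - a), r ^ j ≠ 0 := (geom_sum_pos hr (by omega)).ne'
  have hmass : ∑ n ∈ Icc a b, pstar a b r n = 1 := by
    simpa [hS] using sum_Icc_mul_pstar (a := a) (b := b) hr1 1
  have hcentred : ∑ n ∈ Icc a b, ((n : ℝ) - μ) * pstar a b r n = 0 := by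
    rw [fpoly_eq_sq_mul_sum hab, mul_eq_zero] at hroot
    rw [sum_Icc_mul_pstar hr1, hroot.resolve_left (pow_ne_zero 2 (sub_ne_zero.2 hr1.symm)),
      zero_div]
  have hmean : ∑ n ∈ Icc a b, (n : ℝ) * pstar a b r n = μ := by
    simp only [sub_mul, sum_sub_distrib, ← mul_sum, hmass] at hcentred
    linarith
  refine ⟨pstar_nonneg hr hr1, hmass ▸ hasSum_sum_of_ne_finset_zero fun _ => ?_,
    hmean ▸ hasSum_sum_of_ne_finset_zero fun _ hn => ?_⟩
  · exact pstar_eq_zero_of_notMem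
  · rw [pstar_eq_zero_of_notMem hn, mul_zero]

end Candidate

theorem equilibrium_distribution (a μ b : ℕ) (hau : a < μ) (hub : μ < b)
    (r : ℝ) (hr : 0 < r) (hr1 : r ≠ 1) (hroot : fpoly a μ b r = 0) :
    memV μ (pstar a b r) ∧ ∀ n : ℕ, Lop a b (pstar a b r) n = 0 := by
  have hab : a < b := hau.trans hub
  have hlow : ∀ n < a, pstar a b r n = 0 := fun _ => pstar_of_lt
  have hhigh : ∀ n > b, pstar a b r n = 0 := fun _ => pstar_of_gt
  have hstep : ∀ n, a ≤ n → n < b → pstar a b r (n + 1) = r * pstar a b r n :=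
    fun _ => pstar_succ
  refine ⟨pstar_memV hab.le hr.le hr1 hroot, Lop_eq_zero_of_balance hab hlow hhigh ?_⟩
  intro n han hnb
  rw [lamg_eq_mul_lamr r hlow hhigh hstep, hstep n han hnb]
  ring
end

section
/- Let a, b, μ be natural numbers with a < μ < b, and let p ∈ V_μ satisfy p_n > 0 for all a ≤ n ≤ b. Then λ_r(p) > 0, λ_g(p) > 0, and the entropy production satisfies the inequality ∑_{n=a}^{b} L[p]_n · log p_n ≤ −λ_r(p)·log λ_r(p) · ∑_{n=b+1}^{∞} p_n − λ_g(p)·log λ_g(p) · ∑_{n=0}^{a−1} p_n. (Along a solution t ↦ p(t) of the mean-field ODE system p′_n = L[p]_n, the left-hand side equals the time derivative of the functional H_ab[p] = ∑_{n=0}^{a−1} p_n + ∑_{n=a}^{b} p_n log p_n + ∑_{n=b+1}^{∞} p_n.) -/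
open scoped BigOperators

/-- The tail sum `∑_{n≥m} p_n`. -/
noncomputable def tailSum (m : ℕ) (p : ℕ → ℝ) : ℝ := ∑' n : ℕ, if m ≤ n then p n else 0

/-! With the flux `J_m = λ_r p_m 𝟙_{a<m} - λ_g p_{m-1} 𝟙_{1≤m≤b}` one has `L[p]_n = J_{n+1} - J_n`,
so summation by parts turns the entropy production into the boundary terms
`J_{b+1} log p_b - J_a log p_a ≤ 0` (as `log p_n ≤ 0`) plus
`∑_{a≤n<b} (λ_r p_{n+1} - λ_g p_n)(log p_n - log p_{n+1})`. Since `log` is increasing, each summand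
is at most `(λ_r p_{n+1} - λ_g p_n)(log λ_r - log λ_g)`, and summing the masses gives
`(log λ_r - log λ_g)(λ_g S - λ_r T)` with `S = ∑_{n<a} p_n`, `T = ∑_{n>b} p_n`. The cross terms
`λ_g S log λ_r` and `λ_r T log λ_g` are nonpositive. -/

open Finset Real

theorem sub_mul_log_sub_log_nonneg {x y : ℝ} (hx : 0 < x) (hy : 0 < y) :
    0 ≤ (x - y) * (log x - log y) := by
  rcases le_total x y with h | h
  · exact mul_nonneg_of_nonpos_of_nonpos (by linarith) (by linarith [log_le_log hx h])
  · exact mul_nonneg (by linarith) (by linarith [log_le_log hy h])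

theorem mul_sub_mul_mul_log_sub_le {c g u v : ℝ} (hc : 0 < c) (hg : 0 < g) (hu : 0 < u)
    (hv : 0 < v) : (c * v - g * u) * (log u - log v) ≤ (c * v - g * u) * (log c - log g) := by
  have h := sub_mul_log_sub_log_nonneg (mul_pos hc hv) (mul_pos hg hu)
  rw [log_mul hc.ne' hv.ne', log_mul hg.ne' hu.ne'] at h
  linear_combination h

theorem Finset.sum_Icc_sub_mul_eq {R : Type*} [CommRing R] (K q : ℕ → R) {a b : ℕ}
    (hab : a ≤ b) :
    ∑ n ∈ Icc a b, (K (n + 1) - K n) * q n =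
      K (b + 1) * q b - K a * q a + ∑ n ∈ Ico a b, K (n + 1) * (q n - q (n + 1)) := by
  induction b, hab using Nat.le_induction with
  | base => simp [sub_mul]
  | succ b hab ih =>
    rw [sum_Icc_succ_top (by omega), ih, sum_Ico_succ_top hab]
    ring

theorem tailSum_eq_tsum_sub_sum_range {p : ℕ → ℝ} (hp : Summable p) (m : ℕ) :
    tailSum m p = ∑' n, p n - ∑ n ∈ range m, p n := by
  have hsplit : ∀ n, (if m ≤ n then p n else 0) = p n - Set.indicator (range m) p n := by
    intro n
    by_cases h : m ≤ n
    · simp [h, Set.indicator, not_lt.2 h]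
    · simp [h, Set.indicator, not_le.1 h]
  rw [tailSum, tsum_congr hsplit, hp.tsum_sub (summable_of_ne_finset_zero (s := range m) ?_),
    sum_eq_tsum_indicator]
  intro n hn
  exact Set.indicator_of_notMem hn p

theorem tailSum_nonneg {p : ℕ → ℝ} (hp : ∀ n, 0 ≤ p n) (m : ℕ) : 0 ≤ tailSum m p :=
  tsum_nonneg fun n => by split_ifs <;> simp [hp n]

theorem lamr_nonneg {p : ℕ → ℝ} (hp : ∀ n, 0 ≤ p n) (b : ℕ) : 0 ≤ lamr b p :=
  sum_nonneg fun n _ => hp n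

theorem lamr_pos {p : ℕ → ℝ} (hp : ∀ n, 0 ≤ p n) {a b : ℕ} (hab : a < b) (hpa : 0 < p a) :
    0 < lamr b p :=
  hpa.trans_le (single_le_sum (fun n _ => hp n) (mem_range.2 hab))

theorem lamr_le_one {p : ℕ → ℝ} (hp : ∀ n, 0 ≤ p n) (hsum : HasSum p 1) (b : ℕ) :
    lamr b p ≤ 1 :=
  hsum.tsum_eq ▸ hsum.summable.sum_le_tsum _ fun n _ => hp n

theorem lamr_sub_sum_range (p : ℕ → ℝ) {a b : ℕ} (hab : a ≤ b) :
    lamr b p - ∑ n ∈ range a, p n = ∑ n ∈ Ico a b, p n := by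
  rw [lamr, ← sum_range_add_sum_Ico _ hab, add_sub_cancel_left]

theorem lamg_nonneg {p : ℕ → ℝ} (hp : ∀ n, 0 ≤ p n) (a : ℕ) : 0 ≤ lamg a p :=
  tsum_nonneg fun n => by split_ifs <;> simp [hp n]

theorem lamg_sub_tailSum {p : ℕ → ℝ} (hp : Summable p) {a b : ℕ} (hab : a ≤ b) :
    lamg a p - tailSum (b + 1) p = ∑ n ∈ Ico a b, p (n + 1) := by
  rw [lamg, ← tailSum, tailSum_eq_tsum_sub_sum_range hp, tailSum_eq_tsum_sub_sum_range hp,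
    sum_Ico_add', ← sum_range_add_sum_Ico _ (Nat.succ_le_succ hab)]
  ring

theorem lamg_pos {p : ℕ → ℝ} (hp : ∀ n, 0 ≤ p n) (hsum : Summable p) {a b : ℕ} (hab : a < b)
    (hpb : 0 < p b) : 0 < lamg a p := by
  have hpb_le : p b ≤ ∑ n ∈ Ico a b, p (n + 1) := by
    rw [sum_Ico_add']
    exact single_le_sum (fun n _ => hp n) (mem_Ico.2 ⟨hab, b.lt_succ_self⟩)
  linarith [lamg_sub_tailSum hsum hab.le, tailSum_nonneg hp (b + 1)]

theorem lamg_le_one {p : ℕ → ℝ} (hp : ∀ n, 0 ≤ p n) (hsum : HasSum p 1) (a : ℕ) :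
    lamg a p ≤ 1 := by
  rw [lamg, ← tailSum, tailSum_eq_tsum_sub_sum_range hsum.summable, hsum.tsum_eq]
  linarith [sum_nonneg fun n (_ : n ∈ range (a + 1)) => hp n]

noncomputable def flux (a b : ℕ) (p : ℕ → ℝ) (m : ℕ) : ℝ :=
  lamr b p * (if a + 1 ≤ m then p m else 0) - lamg a p * (if 1 ≤ m ∧ m ≤ b then p (m - 1) else 0)

theorem Lop_eq_flux_sub {a b : ℕ} (hb : 1 ≤ b) (p : ℕ → ℝ) (n : ℕ) :
    Lop a b p n = flux a b p (n + 1) - flux a b p n := by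
  unfold Lop flux
  split_ifs <;> first | omega | simp_all <;> ring

theorem flux_succ_of_mem_Ico {a b n : ℕ} (hn : n ∈ Ico a b) (p : ℕ → ℝ) :
    flux a b p (n + 1) = lamr b p * p (n + 1) - lamg a p * p n := by
  rw [mem_Ico] at hn
  simp [flux, show a + 1 ≤ n + 1 by omega, show n + 1 ≤ b by omega]

theorem flux_self_nonpos {p : ℕ → ℝ} (hp : ∀ n, 0 ≤ p n) (a b : ℕ) : flux a b p a ≤ 0 := by
  simp only [flux, if_neg (Nat.not_succ_le_self a), mul_zero, zero_sub, neg_nonpos]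
  exact mul_nonneg (lamg_nonneg hp a) (by split_ifs <;> simp [hp])

theorem flux_succ_nonneg {p : ℕ → ℝ} (hp : ∀ n, 0 ≤ p n) {a b : ℕ} (hab : a ≤ b) :
    0 ≤ flux a b p (b + 1) := by
  simp only [flux, if_pos (Nat.succ_le_succ hab),
    if_neg (fun h : 1 ≤ b + 1 ∧ b + 1 ≤ b => by omega), mul_zero, sub_zero]
  exact mul_nonneg (lamr_nonneg hp b) (hp (b + 1))

theorem sum_Icc_Lop_mul_eq {a b : ℕ} (hab : a < b) (p q : ℕ → ℝ) :
    ∑ n ∈ Icc a b, Lop a b p n * q n =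
      flux a b p (b + 1) * q b - flux a b p a * q a +
        ∑ n ∈ Ico a b, (lamr b p * p (n + 1) - lamg a p * p n) * (q n - q (n + 1)) := by
  simp only [Lop_eq_flux_sub (Nat.one_le_of_lt hab), sum_Icc_sub_mul_eq _ _ hab.le]
  congr 1
  exact sum_congr rfl fun n hn => by rw [flux_succ_of_mem_Ico hn]

theorem sum_Ico_mul_log_sub_le {c g : ℝ} (hc : 0 < c) (hg : 0 < g) {p : ℕ → ℝ} {a b : ℕ}
    (hpos : ∀ n, a ≤ n → n ≤ b → 0 < p n) :
    ∑ n ∈ Ico a b, (c * p (n + 1) - g * p n) * (log (p n) - log (p (n + 1))) ≤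
      (log c - log g) * (c * ∑ n ∈ Ico a b, p (n + 1) - g * ∑ n ∈ Ico a b, p n) := by
  calc _ ≤ ∑ n ∈ Ico a b, (c * p (n + 1) - g * p n) * (log c - log g) := by
        refine sum_le_sum fun n hn => ?_
        rw [mem_Ico] at hn
        exact mul_sub_mul_mul_log_sub_le hc hg (hpos n hn.1 hn.2.le)
          (hpos (n + 1) (by omega) hn.2)
    _ = _ := by rw [← sum_mul, sum_sub_distrib, mul_sum, mul_sum, mul_comm]

theorem entropy_production_bound (a b μ : ℕ) (hau : a < μ) (hub : μ < b)
    (p : ℕ → ℝ) (hp : memV μ p) (hpos : ∀ n, a ≤ n → n ≤ b → 0 < p n) :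
    0 < lamr b p ∧ 0 < lamg a p ∧
      ∑ n ∈ Finset.Icc a b, Lop a b p n * Real.log (p n) ≤
        -(lamr b p * Real.log (lamr b p)) * tailSum (b + 1) p
          - (lamg a p * Real.log (lamg a p)) * ∑ n ∈ Finset.range a, p n := by
  obtain ⟨hnn, hsum, -⟩ := hp
  have hab : a < b := hau.trans hub
  have hpa : 0 < p a := hpos a le_rfl hab.le
  have hpb : 0 < p b := hpos b hab.le le_rfl
  have hc := lamr_pos hnn hab hpa
  have hg := lamg_pos hnn hsum.summable hab hpb
  refine ⟨hc, hg, ?_⟩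
  have hlog_nonpos : ∀ n, log (p n) ≤ 0 := fun n =>
    log_nonpos (hnn n) (le_hasSum hsum n fun m _ => hnn m)
  have hbdry : flux a b p (b + 1) * log (p b) - flux a b p a * log (p a) ≤ 0 := by
    linarith [mul_nonpos_of_nonneg_of_nonpos (flux_succ_nonneg hnn hab.le) (hlog_nonpos b),
      mul_nonneg_of_nonpos_of_nonpos (flux_self_nonpos hnn a b) (hlog_nonpos a)]
  have hbulk := sum_Ico_mul_log_sub_le hc hg hpos
  rw [← lamg_sub_tailSum hsum.summable hab.le, ← lamr_sub_sum_range p hab.le] at hbulk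
  have hS := mul_nonpos_of_nonneg_of_nonpos
    (mul_nonneg hg.le (sum_nonneg (s := range a) fun n _ => hnn n))
    (log_nonpos hc.le (lamr_le_one hnn hsum b))
  have hT := mul_nonpos_of_nonneg_of_nonpos (mul_nonneg hc.le (tailSum_nonneg hnn (b + 1)))
    (log_nonpos hg.le (lamg_le_one hnn hsum a))
  rw [sum_Icc_Lop_mul_eq hab]
  linear_combination hbdry + hbulk + hS + hT
end

section
/- Let a, b, μ be natural numbers with a < μ < b, and let p ∈ V_μ. Then the following two identities hold: (i) ∑_{n=0}^{a−1} (a−n)·L[p]_n = −λ_g(p) · ∑_{n=0}^{a−1} p_n; (ii) the series ∑_{n=b+1}^{∞} n·L[p]_n converges and ∑_{n=b+1}^{∞} n·L[p]_n = −λ_r(p) · ( ∑_{n=b+1}^{∞} p_n + b·p_{b+1} ). In particular both quantities are nonpositive. -/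
open scoped BigOperators

/-!
For `n < a` only the givers' term of `L` is active and for `n > b` only the receivers' term, so
both weighted sums are sums of weights against discrete derivatives of `p`. On the left, summing
the weights `a - n` by parts against `p (n - 1) - p n` leaves `-∑_{n<a} p n`. On the right, the
finite first moment makes `∑ n p (n + 1)` and `∑ n p n` converge separately, and an index shift
computes their difference.
-/

open Finset

theorem hasSum_ite_le_iff {G : Type*} [AddCommGroup G] [TopologicalSpace G]
    [IsTopologicalAddGroup G] {f : ℕ → G} {g : G} (m : ℕ) :
    HasSum (fun n => if m ≤ n then f n else 0) g ↔ HasSum (fun k => f (k + m)) g := by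
  have : ∑ i ∈ range m, (if m ≤ i then f i else 0) = 0 :=
    sum_eq_zero fun i hi => if_neg (Nat.not_le.mpr (mem_range.mp hi))
  rw [← hasSum_nat_add_iff' m, this, sub_zero]
  simp

theorem sum_range_sub_mul_sub_prev (x : ℕ → ℝ) (a : ℕ) :
    ∑ n ∈ range a, ((a : ℝ) - n) * ((if 1 ≤ n then x (n - 1) else 0) - x n)
      = -∑ n ∈ range a, x n := by
  cases a with
  | zero => simp
  | succ k =>
    have hprev : ∑ n ∈ range (k + 1), ((↑(k + 1) : ℝ) - n) * (if 1 ≤ n then x (n - 1) else 0)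
        = ∑ n ∈ range (k + 1), ((k : ℝ) - n) * x n := by
      rw [sum_range_succ', sum_range_succ]
      simp
    have hself : ∑ n ∈ range (k + 1), ((↑(k + 1) : ℝ) - n) * x n
        = ∑ n ∈ range (k + 1), ((k : ℝ) - n) * x n + ∑ n ∈ range (k + 1), x n := by
      rw [← sum_add_distrib]
      exact sum_congr rfl fun n _ => by push_cast; ring
    simp only [mul_sub, sum_sub_distrib, hprev, hself]
    ring

theorem hasSum_add_mul_sub_succ {q : ℕ → ℝ} {T : ℝ} (hq : HasSum q T)
    (hmom : Summable fun k : ℕ => (k : ℝ) * q k) (c : ℝ) :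
    HasSum (fun k : ℕ => ((k : ℝ) + c + 1) * (q (k + 1) - q k)) (-(T + c * q 0)) := by
  obtain ⟨M, hM⟩ := hmom
  have hM' : HasSum (fun k : ℕ => ((k : ℝ) + 1) * q (k + 1)) M := by
    simpa using (hasSum_nat_add_iff' 1).2 hM
  have hq' : HasSum (fun k => q (k + 1)) (T - q 0) := by
    simpa using (hasSum_nat_add_iff' 1).2 hq
  have h := (hM'.add (hq'.mul_left c)).sub (hM.add (hq.mul_left (c + 1)))
  rw [show -(T + c * q 0) = M + c * (T - q 0) - (M + (c + 1) * T) by ring]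
  exact h.congr_fun fun k => by ring

section Lop

variable {a b : ℕ} {p : ℕ → ℝ} {n : ℕ}

theorem Lop_of_lt (hab : a ≤ b) (hn : n < a) :
    Lop a b p n = lamg a p * ((if 1 ≤ n then p (n - 1) else 0) - p n) := by
  have h₁ : ¬a ≤ n := by omega
  have h₂ : ¬a + 1 ≤ n := by omega
  have h₃ : n ≤ b := by omega
  have h₄ : n ≤ b - 1 := by omega
  simp [Lop, h₁, h₂, h₃, h₄]

theorem Lop_of_gt (hab : a ≤ b) (hn : b < n) :
    Lop a b p n = lamr b p * (p (n + 1) - p n) := by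
  have h₁ : a ≤ n := by omega
  have h₂ : a + 1 ≤ n := by omega
  have h₃ : ¬n ≤ b := by omega
  have h₄ : ¬n ≤ b - 1 := by omega
  simp [Lop, h₁, h₂, h₃, h₄]

theorem sum_range_sub_mul_Lop (hab : a ≤ b) :
    ∑ n ∈ range a, ((a : ℝ) - n) * Lop a b p n = -(lamg a p) * ∑ n ∈ range a, p n := by
  rw [sum_congr rfl fun n hn => by rw [Lop_of_lt hab (mem_range.mp hn), mul_left_comm],
    ← mul_sum, sum_range_sub_mul_sub_prev, mul_neg, neg_mul]

theorem hasSum_mul_Lop_tail (hab : a ≤ b) (hp : Summable p)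
    (hmom : Summable fun n : ℕ => (n : ℝ) * p n) :
    HasSum (fun n : ℕ => if b + 1 ≤ n then (n : ℝ) * Lop a b p n else 0)
      (-(lamr b p) * (tailSum (b + 1) p + b * p (b + 1))) := by
  set q : ℕ → ℝ := fun k => p (k + (b + 1))
  have hq : HasSum q (tailSum (b + 1) p) := by
    have hq := ((summable_nat_add_iff (b + 1)).2 hp).hasSum
    rwa [tailSum, ((hasSum_ite_le_iff (b + 1)).2 hq).tsum_eq]
  have hqmom : Summable fun k : ℕ => (k : ℝ) * q k := by
    have h := ((summable_nat_add_iff (b + 1)).2 hmom).sub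
      (((summable_nat_add_iff (b + 1)).2 hp).mul_left (b + 1 : ℝ))
    exact h.congr fun k => by push_cast; ring
  rw [hasSum_ite_le_iff, neg_mul, ← mul_neg, show p (b + 1) = q 0 by simp [q]]
  refine ((hasSum_add_mul_sub_succ hq hqmom b).mul_left (lamr b p)).congr_fun fun k => ?_
  rw [Lop_of_gt hab (by omega)]
  simp only [q, Nat.cast_add, Nat.cast_one, add_right_comm k 1]
  ring

end Lop

theorem weighted_sums_of_L (a b μ : ℕ) (hau : a < μ) (hub : μ < b)
    (p : ℕ → ℝ) (hp : memV μ p) :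
    (∑ n ∈ Finset.range a, ((a : ℝ) - n) * Lop a b p n
        = -(lamg a p) * ∑ n ∈ Finset.range a, p n) ∧
      HasSum (fun n : ℕ => if b + 1 ≤ n then (n : ℝ) * Lop a b p n else 0)
        (-(lamr b p) * (tailSum (b + 1) p + (b : ℝ) * p (b + 1))) ∧
      (∑ n ∈ Finset.range a, ((a : ℝ) - n) * Lop a b p n ≤ 0) ∧
      (-(lamr b p) * (tailSum (b + 1) p + (b : ℝ) * p (b + 1)) ≤ 0) := by
  obtain ⟨hpos, hsum, hmean⟩ := hp
  have hab : a ≤ b := (hau.trans hub).le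
  have hlamg : 0 ≤ lamg a p := tsum_nonneg fun n => by split_ifs <;> simp [hpos n]
  have hlamr : 0 ≤ lamr b p := sum_nonneg fun n _ => hpos n
  have htail : 0 ≤ tailSum (b + 1) p := tsum_nonneg fun n => by split_ifs <;> simp [hpos n]
  refine ⟨sum_range_sub_mul_Lop hab, hasSum_mul_Lop_tail hab hsum.summable hmean.summable,
    ?_, ?_⟩
  · rw [sum_range_sub_mul_Lop hab, neg_mul]
    exact neg_nonpos.mpr (mul_nonneg hlamg (sum_nonneg fun n _ => hpos n))
  · rw [neg_mul]
    exact neg_nonpos.mpr (mul_nonneg hlamr (add_nonneg htail (mul_nonneg b.cast_nonneg (hpos _))))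
end

section
/- Let a, μ be natural numbers with 0 ≤ a < μ, and let p be the geometric-type sequence defined by p_n = 0 for n ≤ a−1 and p_n = (1/(μ−a+1)) · ((μ−a)/(μ−a+1))^{n−a} for n ≥ a. Then the double series defining the Gini index converges and G[p] = 1 − (μ² − a² + a) / ( μ·(1 + 2(μ−a)) ). -/
open scoped BigOperators

/-- The geometric-type equilibrium distribution supported on `{a, a+1, …}`. -/
noncomputable def pgeo (a μ : ℕ) (n : ℕ) : ℝ :=
  if n < a then 0
  else (1 / ((μ : ℝ) - a + 1)) * (((μ : ℝ) - a) / ((μ : ℝ) - a + 1)) ^ (n - a)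

/-- The Gini index `G[p] = (1/(2μ)) ∑_{i,j≥0} |i−j| p_i p_j` of a sequence `p`
with mean `μ`. -/
noncomputable def gini (μ : ℕ) (p : ℕ → ℝ) : ℝ :=
  (1 / (2 * (μ : ℝ))) * ∑' ij : ℕ × ℕ, |(ij.1 : ℝ) - (ij.2 : ℝ)| * p ij.1 * p ij.2
/-!
Above `a` the distribution is the geometric law `(1 - r) rⁿ` with `r = B / (B + 1)`, `B = μ - a`,
shifted by `a`, and the numerator `∑ |i - j| p_i p_j` of the Gini index is invariant under
shifts. Splitting `|m - n|` into the two truncated differences and substituting `m = k + n`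
gives `∑ |m - n| rᵐ rⁿ = 2 (∑ k rᵏ) (∑ r²ⁿ) = 2r / ((1 - r)² (1 - r²))`, so the numerator is
`2r / (1 - r²) = 2B(B + 1) / (2B + 1)`; dividing by `2μ` yields the formula.
-/

section GeometricSums

variable {r : ℝ}

theorem hasSum_natSub_mul_pow_mul_pow (hr : |r| < 1) :
    HasSum (fun p : ℕ × ℕ => ((p.1 - p.2 : ℕ) : ℝ) * r ^ p.1 * r ^ p.2)
      (r / ((1 - r) ^ 2 * (1 - r ^ 2))) := by
  have hr2 : |r ^ 2| < 1 := by rw [abs_pow]; exact pow_lt_one₀ (abs_nonneg r) hr two_ne_zero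
  have hprod := (hasSum_coe_mul_geometric_of_norm_lt_one (𝕜 := ℝ) hr).mul
    (hasSum_geometric_of_abs_lt_one hr2)
    (summable_mul_of_summable_norm (f := fun n : ℕ => (n : ℝ) * r ^ n)
      (by simpa using summable_norm_pow_mul_geometric_of_norm_lt_one (R := ℝ) 1 hr)
      (summable_geometric_of_abs_lt_one hr2).norm)
  have hshift : Function.Injective (fun p : ℕ × ℕ => (p.1 + p.2, p.2)) := by
    intro p q h
    simp only [Prod.mk.injEq] at h
    exact Prod.ext (by omega) h.2
  have hval : r / ((1 - r) ^ 2 * (1 - r ^ 2)) = r / (1 - r) ^ 2 * (1 - r ^ 2)⁻¹ := by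
    rw [div_mul_eq_div_div, div_eq_mul_inv _ (1 - r ^ 2)]
  rw [hval, ← hshift.hasSum_iff]
  · exact hprod.congr_fun fun p => by
      simp only [Function.comp_apply, Nat.add_sub_cancel]
      ring
  · rintro ⟨m, n⟩ hmn
    have : m - n = 0 := by
      by_contra h
      exact hmn ⟨(m - n, n), Prod.ext (Nat.sub_add_cancel (by omega)) rfl⟩
    simp [this]

theorem hasSum_abs_sub_mul_pow_mul_pow (hr : |r| < 1) :
    HasSum (fun p : ℕ × ℕ => |(p.1 : ℝ) - p.2| * r ^ p.1 * r ^ p.2)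
      (2 * r / ((1 - r) ^ 2 * (1 - r ^ 2))) := by
  have h := hasSum_natSub_mul_pow_mul_pow hr
  have hswap := (Equiv.prodComm ℕ ℕ).hasSum_iff.2 h
  convert h.add hswap using 1
  · ext ⟨m, n⟩
    simp only [Function.comp_apply, Equiv.prodComm_apply, Prod.fst_swap, Prod.snd_swap]
    rcases le_total m n with hmn | hmn
    · rw [Nat.sub_eq_zero_of_le hmn, Nat.cast_sub hmn, abs_of_nonpos (by simpa using hmn)]
      ring
    · rw [Nat.sub_eq_zero_of_le hmn, Nat.cast_sub hmn, abs_of_nonneg (by simpa using hmn)]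
      ring
  · ring

theorem hasSum_abs_sub_mul_geometric (hr : |r| < 1) :
    HasSum (fun p : ℕ × ℕ => |(p.1 : ℝ) - p.2| * ((1 - r) * r ^ p.1) * ((1 - r) * r ^ p.2))
      (2 * r / (1 - r ^ 2)) := by
  have h1r : 1 - r ≠ 0 := by linarith [le_abs_self r]
  have h := (hasSum_abs_sub_mul_pow_mul_pow hr).mul_left ((1 - r) ^ 2)
  have hval : (1 - r) ^ 2 * (2 * r / ((1 - r) ^ 2 * (1 - r ^ 2))) = 2 * r / (1 - r ^ 2) := by
    field_simp
  rw [hval] at h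
  exact h.congr_fun fun p => by ring

theorem hasSum_abs_sub_mul_geometric_of_mean {B : ℝ} (hB : 0 ≤ B) :
    HasSum (fun p : ℕ × ℕ => |(p.1 : ℝ) - p.2| * (1 / (B + 1) * (B / (B + 1)) ^ p.1) *
      (1 / (B + 1) * (B / (B + 1)) ^ p.2)) (2 * B * (B + 1) / (1 + 2 * B)) := by
  have hr : |B / (B + 1)| < 1 := by
    rw [abs_of_nonneg (by positivity), div_lt_one (by positivity)]
    linarith
  have h1r : 1 - B / (B + 1) = 1 / (B + 1) := by
    field_simp
    ring
  have hval : 2 * (B / (B + 1)) / (1 - (B / (B + 1)) ^ 2) = 2 * B * (B + 1) / (1 + 2 * B) := by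
    have hden : 1 - (B / (B + 1)) ^ 2 = (1 + 2 * B) / (B + 1) ^ 2 := by
      field_simp
      ring
    have : 0 < 1 + 2 * B := by positivity
    rw [hden]
    field_simp
  simpa only [h1r, hval] using hasSum_abs_sub_mul_geometric hr

end GeometricSums

theorem hasSum_abs_sub_mul_mul_nat_add_iff {p : ℕ → ℝ} {a : ℕ} (hp : ∀ n < a, p n = 0) {s : ℝ} :
    HasSum (fun ij : ℕ × ℕ => |(ij.1 : ℝ) - ij.2| * p ij.1 * p ij.2) s ↔
      HasSum (fun mn : ℕ × ℕ => |(mn.1 : ℝ) - mn.2| * p (a + mn.1) * p (a + mn.2)) s := by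
  have hshift : Function.Injective (fun mn : ℕ × ℕ => (a + mn.1, a + mn.2)) := by
    intro x y h
    simp only [Prod.mk.injEq] at h
    exact Prod.ext (by omega) (by omega)
  rw [← hshift.hasSum_iff]
  · simp only [Function.comp_def, Nat.cast_add, add_sub_add_left_eq_sub]
  · rintro ⟨i, j⟩ hij
    by_cases hi : i < a
    · simp [hp i hi]
    by_cases hj : j < a
    · simp [hp j hj]
    exact absurd ⟨(i - a, j - a), Prod.ext (Nat.add_sub_cancel' (by omega))
      (Nat.add_sub_cancel' (by omega))⟩ hij

lemma pgeo_of_lt {a μ n : ℕ} (hn : n < a) : pgeo a μ n = 0 := if_pos hn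

lemma pgeo_add (a μ n : ℕ) :
    pgeo a μ (a + n) = 1 / ((μ : ℝ) - a + 1) * (((μ : ℝ) - a) / ((μ : ℝ) - a + 1)) ^ n := by
  rw [pgeo, if_neg (by omega), Nat.add_sub_cancel_left]

theorem gini_of_geometric_type (a μ : ℕ) (hau : a < μ) :
    Summable (fun ij : ℕ × ℕ => |(ij.1 : ℝ) - (ij.2 : ℝ)| * pgeo a μ ij.1 * pgeo a μ ij.2) ∧
      gini μ (pgeo a μ) =
        1 - ((μ : ℝ) ^ 2 - (a : ℝ) ^ 2 + a) / ((μ : ℝ) * (1 + 2 * ((μ : ℝ) - a))) := by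
  have hμa : (a : ℝ) + 1 ≤ μ := by exact_mod_cast hau
  have hsum := (hasSum_abs_sub_mul_mul_nat_add_iff fun _ => pgeo_of_lt).2 <| by
    simpa only [pgeo_add] using
      hasSum_abs_sub_mul_geometric_of_mean (B := (μ : ℝ) - a) (by linarith)
  refine ⟨hsum.summable, ?_⟩
  have hμ : (0 : ℝ) < μ := by linarith [(Nat.cast_nonneg a : (0 : ℝ) ≤ a)]
  have h2 : (0 : ℝ) < 1 + 2 * (μ - a) := by linarith
  rw [gini, hsum.tsum_eq]
  field_simp
  ring
end

section
/- For every real C > 0 there exists a constant L > 0 (depending only on C) such that for every integer N ≥ 2 and every real sequence x = (x_k)_{k∈ℕ} satisfying ∑_{k≥0} (k+1)·|x_k| ≤ C and ∑_{k≥0} (k+1)·|x_k|² ≤ C/N, one has ∑_{k≥0} |x_k| ≤ L·√(log N)/√N. -/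
/-! Split `∑ |x k|` at `k = N`. On the head, Cauchy–Schwarz against the weights `(k + 1)⁻¹` gives
`(∑_{k<N} |x k|)² ≤ H_N · ∑ (k + 1) |x k|² ≤ (1 + log N) · C / N`, with `H_N` the harmonic number.
On the tail `|x k| ≤ (k + 1) |x k| / N`, so it contributes at most `C / N`, which is smaller than
`√(log N) / √N` up to a constant. -/

open Real Finset

theorem sq_sum_le_harmonic_mul_sum_mul_sq (n : ℕ) (a : ℕ → ℝ) :
    (∑ i ∈ range n, a i) ^ 2 ≤ harmonic n * ∑ i ∈ range n, ((i : ℝ) + 1) * a i ^ 2 := by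
  have hharmonic : (harmonic n : ℝ) = ∑ i ∈ range n, ((i : ℝ) + 1)⁻¹ := by
    simp [harmonic, Rat.cast_sum]
  rw [hharmonic]
  refine sum_sq_le_sum_mul_sum_of_sq_le_mul _ (fun i _ => by positivity)
    (fun i _ => by positivity) fun i _ => ?_
  rw [← mul_assoc, inv_mul_cancel₀ (by positivity), one_mul]

theorem sum_range_le_sqrt_one_add_log_mul {n : ℕ} {a : ℕ → ℝ} {S : ℝ}
    (hS : ∑ i ∈ range n, ((i : ℝ) + 1) * a i ^ 2 ≤ S) :
    ∑ i ∈ range n, a i ≤ √((1 + log n) * S) := by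
  refine le_sqrt_of_sq_le ?_
  calc (∑ i ∈ range n, a i) ^ 2
      ≤ harmonic n * ∑ i ∈ range n, ((i : ℝ) + 1) * a i ^ 2 :=
        sq_sum_le_harmonic_mul_sum_mul_sq n a
    _ ≤ (1 + log n) * S :=
        mul_le_mul (harmonic_le_one_add_log n) hS
          (sum_nonneg fun i _ => by positivity) (by positivity)

theorem Summable.of_natCast_add_one_mul {f : ℕ → ℝ} (hf : ∀ k, 0 ≤ f k)
    (hsum : Summable fun k : ℕ => ((k : ℝ) + 1) * f k) : Summable f :=
  hsum.of_nonneg_of_le hf fun k => le_mul_of_one_le_left (hf k) (by simp)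

theorem natCast_mul_tsum_nat_add_le {f : ℕ → ℝ} (hf : ∀ k, 0 ≤ f k)
    (hsum : Summable fun k : ℕ => ((k : ℝ) + 1) * f k) (n : ℕ) :
    n * ∑' k : ℕ, f (k + n) ≤ ∑' k : ℕ, ((k : ℝ) + 1) * f k := by
  have hf_summable : Summable fun k => f (k + n) :=
    (summable_nat_add_iff n).2 (.of_natCast_add_one_mul hf hsum)
  rw [← tsum_mul_left]
  calc ∑' k : ℕ, (n : ℝ) * f (k + n)
      ≤ ∑' k : ℕ, (((k + n : ℕ) : ℝ) + 1) * f (k + n) :=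
        hf_summable.mul_left _ |>.tsum_le_tsum (fun k => by
          gcongr
          · exact hf _
          · push_cast; linarith [(Nat.cast_nonneg k : (0 : ℝ) ≤ k)])
          ((summable_nat_add_iff n).2 hsum)
    _ ≤ ∑' k : ℕ, ((k : ℝ) + 1) * f k :=
        tsum_comp_le_tsum_of_inj hsum (fun k => mul_nonneg (by positivity) (hf k))
          (add_left_injective n)

theorem one_half_le_log {t : ℝ} (ht : 2 ≤ t) : 1 / 2 ≤ log t := by
  linarith [log_two_gt_d9, log_le_log zero_lt_two ht]

theorem one_add_log_le_three_mul_log {t : ℝ} (ht : 2 ≤ t) : 1 + log t ≤ 3 * log t := by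
  linarith [one_half_le_log ht]

theorem inv_le_sqrt_two_mul_sqrt_log_div_sqrt {t : ℝ} (ht : 2 ≤ t) :
    t⁻¹ ≤ √2 * √(log t) / √t := by
  have hsqrt_le : √t ≤ t := sqrt_le_iff.2 ⟨by linarith, by nlinarith⟩
  have hone_le : 1 ≤ √2 * √(log t) := by
    rw [← sqrt_mul zero_le_two]
    exact one_le_sqrt.2 (by linarith [one_half_le_log ht])
  calc t⁻¹ ≤ (√t)⁻¹ := inv_anti₀ (sqrt_pos.2 (by linarith)) hsqrt_le
    _ = 1 / √t := (one_div _).symm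
    _ ≤ √2 * √(log t) / √t := by gcongr

theorem l1_bound_from_weighted_moments :
    ∀ C : ℝ, 0 < C → ∃ L : ℝ, 0 < L ∧
      ∀ N : ℕ, 2 ≤ N → ∀ x : ℕ → ℝ,
        Summable (fun k : ℕ => ((k : ℝ) + 1) * |x k|) →
        (∑' k : ℕ, ((k : ℝ) + 1) * |x k|) ≤ C →
        Summable (fun k : ℕ => ((k : ℝ) + 1) * |x k| ^ 2) →
        (∑' k : ℕ, ((k : ℝ) + 1) * |x k| ^ 2) ≤ C / N →
        (∑' k : ℕ, |x k|) ≤ L * Real.sqrt (Real.log N) / Real.sqrt N := by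
  intro C hC
  refine ⟨√(3 * C) + √2 * C, by positivity, fun N hN x hs1 hc1 hs2 hc2 => ?_⟩
  have hN' : (2 : ℝ) ≤ N := by exact_mod_cast hN
  have hhead : ∑ i ∈ range N, |x i| ≤ √(3 * C) * √(log N) / √N :=
    calc ∑ i ∈ range N, |x i|
        ≤ √((1 + log N) * (C / N)) :=
          sum_range_le_sqrt_one_add_log_mul <|
            (hs2.sum_le_tsum _ fun k _ => by positivity).trans hc2
      _ ≤ √(3 * log N * (C / N)) := by gcongr; exact one_add_log_le_three_mul_log hN'
      _ = √(3 * C) * √(log N) / √N := by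
        rw [show 3 * log N * (C / N) = 3 * C * log N / N by ring, sqrt_div' _ (by positivity),
          sqrt_mul (by positivity)]
  have htail : ∑' k : ℕ, |x (k + N)| ≤ √2 * C * √(log N) / √N :=
    calc ∑' k : ℕ, |x (k + N)|
        ≤ C * (N : ℝ)⁻¹ := by
          rw [le_mul_inv_iff₀ (by positivity), mul_comm]
          exact (natCast_mul_tsum_nat_add_le (fun k => abs_nonneg (x k)) hs1 N).trans hc1
      _ ≤ C * (√2 * √(log N) / √N) := by gcongr; exact inv_le_sqrt_two_mul_sqrt_log_div_sqrt hN'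
      _ = √2 * C * √(log N) / √N := by ring
  calc ∑' k : ℕ, |x k|
      = ∑ i ∈ range N, |x i| + ∑' k : ℕ, |x (k + N)| :=
        ((Summable.of_natCast_add_one_mul (fun k => abs_nonneg (x k)) hs1).sum_add_tsum_nat_add
          N).symm
    _ ≤ √(3 * C) * √(log N) / √N + √2 * C * √(log N) / √N := add_le_add hhead htail
    _ = (√(3 * C) + √2 * C) * √(log N) / √N := by ring
end

section
/- Let a, b be natural numbers with a < b. Then for all probability mass functions p, q on ℕ (i.e., p_n, q_n ≥ 0 with ∑_{n≥0} p_n = ∑_{n≥0} q_n = 1), the operator L is Lipschitz in the ℓ¹ norm: ∑_{n≥0} |L[p]_n − L[q]_n| ≤ 8·∑_{n≥0} |p_n − q_n|. -/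
/-
Write `L[p] = λ_r(p) · D[p] + λ_g(p) · U[p]`, where `D` moves mass down from `n + 1` to `n`
(for `n ≥ a`) and `U` moves it up from `n - 1` to `n` (for `n ≤ b`). Both are linear, and each is
a difference of two injective reindexings of `p` cut down to a set, so `‖D e‖₁, ‖U e‖₁ ≤ 2‖e‖₁`;
the functionals `λ_r, λ_g` are linear with `|λ(e)| ≤ ‖e‖₁`. From
`λ(p) X(p) - λ(q) X(q) = λ(p) X(p - q) + λ(p - q) X(q)` and `‖p‖₁ = ‖q‖₁ = 1`, each of the two
products moves by at most `1 · 2‖p - q‖₁ + ‖p - q‖₁ · 2`, whence the constant `8`.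
-/

open scoped BigOperators

section Reindexing

variable {ι κ : Type*} {P : ι → Prop} [DecidablePred P] {σ : ι → κ} {e : κ → ℝ}

lemma summable_ite_comp (hσ : Set.InjOn σ {i | P i}) (he : Summable e) :
    Summable fun i => if P i then e (σ i) else 0 := by
  have hsub : Summable ((e ∘ σ) ∘ ((↑) : {i | P i} → ι)) :=
    he.comp_injective (Set.injOn_iff_injective.1 hσ)
  rw [summable_subtype_iff_indicator] at hsub
  convert hsub using 2 with i
  by_cases h : P i <;> simp [h]

lemma tsum_abs_ite_comp_le (hσ : Set.InjOn σ {i | P i}) (he : Summable e) :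
    ∑' i, |if P i then e (σ i) else 0| ≤ ∑' k, |e k| := by
  have hind : (fun i => |if P i then e (σ i) else 0|)
      = Set.indicator {i | P i} (fun i => |e (σ i)|) := by
    funext i
    by_cases h : P i <;> simp [h]
  rw [hind, ← tsum_subtype]
  exact tsum_comp_le_tsum_of_inj he.abs (fun k => abs_nonneg (e k))
    (Set.injOn_iff_injective.1 hσ)

lemma summable_ite {P : κ → Prop} [DecidablePred P] (he : Summable e) :
    Summable fun k => if P k then e k else 0 :=
  summable_ite_comp (Set.injOn_id _) he

lemma tsum_abs_ite_le {P : κ → Prop} [DecidablePred P] (he : Summable e) :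
    ∑' k, |if P k then e k else 0| ≤ ∑' k, |e k| :=
  tsum_abs_ite_comp_le (Set.injOn_id _) he

end Reindexing

section AbsSeries

variable {ι : Type*} {u v : ι → ℝ}

lemma tsum_abs_add_le (hu : Summable u) (hv : Summable v) :
    ∑' i, |u i + v i| ≤ ∑' i, |u i| + ∑' i, |v i| := by
  rw [← hu.abs.tsum_add hv.abs]
  exact (hu.add hv).abs.tsum_le_tsum (fun i => abs_add_le _ _) (hu.abs.add hv.abs)

lemma tsum_abs_sub_le (hu : Summable u) (hv : Summable v) :
    ∑' i, |u i - v i| ≤ ∑' i, |u i| + ∑' i, |v i| := by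
  simpa only [sub_eq_add_neg, abs_neg] using tsum_abs_add_le hu hv.neg

lemma abs_tsum_le_tsum_abs (hu : Summable u) : |∑' i, u i| ≤ ∑' i, |u i| := by
  rw [← Real.norm_eq_abs]
  exact norm_tsum_le_tsum_norm hu.norm

lemma tsum_abs_eq_one_of_hasSum (hu0 : ∀ i, 0 ≤ u i) (hu : HasSum u 1) : ∑' i, |u i| = 1 := by
  rw [tsum_congr fun i => abs_of_nonneg (hu0 i)]
  exact hu.tsum_eq

lemma tsum_abs_mul_sub_mul_le (x y : ℝ) (hu : Summable u) (hv : Summable v) :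
    ∑' i, |x * u i - y * v i| ≤ |x| * ∑' i, |u i - v i| + |x - y| * ∑' i, |v i| := by
  have hbound : ∀ i, |x * u i - y * v i| ≤ |x| * |u i - v i| + |x - y| * |v i| := fun i => by
    calc |x * u i - y * v i| = |x * (u i - v i) + (x - y) * v i| := by ring_nf
      _ ≤ |x| * |u i - v i| + |x - y| * |v i| := by
        rw [← abs_mul, ← abs_mul]; exact abs_add_le _ _
  have hmaj : Summable fun i => |x| * |u i - v i| + |x - y| * |v i| :=
    ((hu.sub hv).abs.mul_left _).add (hv.abs.mul_left _)
  calc ∑' i, |x * u i - y * v i|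
      ≤ ∑' i, (|x| * |u i - v i| + |x - y| * |v i|) :=
        (hmaj.of_nonneg_of_le (fun i => abs_nonneg _) hbound).tsum_le_tsum hbound hmaj
    _ = |x| * ∑' i, |u i - v i| + |x - y| * ∑' i, |v i| := by
        rw [((hu.sub hv).abs.mul_left _).tsum_add (hv.abs.mul_left _), tsum_mul_left,
          tsum_mul_left]

lemma tsum_abs_mul_sub_mul_le_of_le {x y δ : ℝ} (hu : Summable u) (hv : Summable v)
    (hx : |x| ≤ 1) (hxy : |x - y| ≤ δ) (huv : ∑' i, |u i - v i| ≤ 2 * δ)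
    (hv2 : ∑' i, |v i| ≤ 2) :
    ∑' i, |x * u i - y * v i| ≤ 4 * δ := by
  have hδ : 0 ≤ δ := (abs_nonneg _).trans hxy
  calc ∑' i, |x * u i - y * v i|
      ≤ |x| * ∑' i, |u i - v i| + |x - y| * ∑' i, |v i| := tsum_abs_mul_sub_mul_le x y hu hv
    _ ≤ 1 * (2 * δ) + δ * 2 := by gcongr
    _ = 4 * δ := by ring

end AbsSeries

lemma Nat.sub_one_injOn : Set.InjOn (· - 1) {n : ℕ | 1 ≤ n} := fun m hm n hn h => by
  simp only [Set.mem_ofPred_eq] at hm hn h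
  omega

def transferDown (a : ℕ) (e : ℕ → ℝ) (n : ℕ) : ℝ :=
  (if a ≤ n then e (n + 1) else 0) - (if a + 1 ≤ n then e n else 0)

def transferUp (b : ℕ) (e : ℕ → ℝ) (n : ℕ) : ℝ :=
  (if 1 ≤ n ∧ n ≤ b then e (n - 1) else 0) - (if n ≤ b - 1 then e n else 0)

section Transfer

variable (a b : ℕ) {e p q : ℕ → ℝ}

lemma Lop_eq (n : ℕ) :
    Lop a b p n = lamr b p * transferDown a p n + lamg a p * transferUp b p n := rfl

lemma transferUp_injOn : Set.InjOn (· - 1) {n | 1 ≤ n ∧ n ≤ b} :=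
  Nat.sub_one_injOn.mono fun _ hn => hn.1

lemma summable_transferDown (he : Summable e) : Summable (transferDown a e) :=
  (summable_ite_comp (add_left_injective 1).injOn he).sub (summable_ite he)

lemma summable_transferUp (he : Summable e) : Summable (transferUp b e) :=
  (summable_ite_comp (transferUp_injOn b) he).sub (summable_ite he)

lemma tsum_abs_transferDown_le (he : Summable e) :
    ∑' n, |transferDown a e n| ≤ 2 * ∑' n, |e n| := by
  unfold transferDown
  rw [two_mul]
  exact (tsum_abs_sub_le (summable_ite_comp (add_left_injective 1).injOn he)
    (summable_ite he)).trans
    (add_le_add (tsum_abs_ite_comp_le (add_left_injective 1).injOn he) (tsum_abs_ite_le he))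

lemma tsum_abs_transferUp_le (he : Summable e) :
    ∑' n, |transferUp b e n| ≤ 2 * ∑' n, |e n| := by
  unfold transferUp
  rw [two_mul]
  exact (tsum_abs_sub_le (summable_ite_comp (transferUp_injOn b) he) (summable_ite he)).trans
    (add_le_add (tsum_abs_ite_comp_le (transferUp_injOn b) he) (tsum_abs_ite_le he))

lemma transferDown_sub (n : ℕ) :
    transferDown a p n - transferDown a q n = transferDown a (p - q) n := by
  simp only [transferDown, Pi.sub_apply]
  split_ifs <;> ring

lemma transferUp_sub (n : ℕ) :
    transferUp b p n - transferUp b q n = transferUp b (p - q) n := by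
  simp only [transferUp, Pi.sub_apply]
  split_ifs <;> ring

lemma lamr_sub : lamr b p - lamr b q = lamr b (p - q) :=
  (Finset.sum_sub_distrib ..).symm

lemma lamg_sub (hp : Summable p) (hq : Summable q) : lamg a p - lamg a q = lamg a (p - q) := by
  rw [lamg, lamg, ← (summable_ite hp).tsum_sub (summable_ite hq), lamg]
  congr 1 with ℓ
  split_ifs <;> simp

lemma abs_lamr_le (he : Summable e) : |lamr b e| ≤ ∑' n, |e n| :=
  (Finset.abs_sum_le_sum_abs _ _).trans (he.abs.sum_le_tsum _ fun n _ => abs_nonneg (e n))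

lemma abs_lamg_le (he : Summable e) : |lamg a e| ≤ ∑' n, |e n| :=
  (abs_tsum_le_tsum_abs (summable_ite he)).trans (tsum_abs_ite_le he)

end Transfer

section Lipschitz

variable (a b : ℕ) {p q : ℕ → ℝ}

lemma tsum_abs_lamr_mul_transferDown_sub_le (hp0 : ∀ n, 0 ≤ p n) (hq0 : ∀ n, 0 ≤ q n)
    (hp : HasSum p 1) (hq : HasSum q 1) :
    ∑' n, |lamr b p * transferDown a p n - lamr b q * transferDown a q n|
      ≤ 4 * ∑' n, |p n - q n| := by
  have hpq : Summable (p - q) := hp.summable.sub hq.summable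
  refine tsum_abs_mul_sub_mul_le_of_le (summable_transferDown a hp.summable)
    (summable_transferDown a hq.summable) ?_ ?_ ?_ ?_
  · rw [← tsum_abs_eq_one_of_hasSum hp0 hp]
    exact abs_lamr_le b hp.summable
  · rw [lamr_sub]
    exact abs_lamr_le b hpq
  · simp only [transferDown_sub]
    exact tsum_abs_transferDown_le a hpq
  · calc _ ≤ 2 * ∑' n, |q n| := tsum_abs_transferDown_le a hq.summable
      _ = 2 := by rw [tsum_abs_eq_one_of_hasSum hq0 hq, mul_one]

lemma tsum_abs_lamg_mul_transferUp_sub_le (hp0 : ∀ n, 0 ≤ p n) (hq0 : ∀ n, 0 ≤ q n)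
    (hp : HasSum p 1) (hq : HasSum q 1) :
    ∑' n, |lamg a p * transferUp b p n - lamg a q * transferUp b q n|
      ≤ 4 * ∑' n, |p n - q n| := by
  have hpq : Summable (p - q) := hp.summable.sub hq.summable
  refine tsum_abs_mul_sub_mul_le_of_le (summable_transferUp b hp.summable)
    (summable_transferUp b hq.summable) ?_ ?_ ?_ ?_
  · rw [← tsum_abs_eq_one_of_hasSum hp0 hp]
    exact abs_lamg_le a hp.summable
  · rw [lamg_sub a hp.summable hq.summable]
    exact abs_lamg_le a hpq
  · simp only [transferUp_sub]
    exact tsum_abs_transferUp_le b hpq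
  · calc _ ≤ 2 * ∑' n, |q n| := tsum_abs_transferUp_le b hq.summable
      _ = 2 := by rw [tsum_abs_eq_one_of_hasSum hq0 hq, mul_one]

end Lipschitz

theorem Lop_lipschitz_general (a b : ℕ) (p q : ℕ → ℝ)
    (hp0 : ∀ n, 0 ≤ p n) (hq0 : ∀ n, 0 ≤ q n)
    (hp : HasSum p 1) (hq : HasSum q 1) :
    (∑' n : ℕ, |Lop a b p n - Lop a b q n|) ≤ 8 * ∑' n : ℕ, |p n - q n| := by
  have hdown := tsum_abs_lamr_mul_transferDown_sub_le a b hp0 hq0 hp hq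
  have hup := tsum_abs_lamg_mul_transferUp_sub_le a b hp0 hq0 hp hq
  have hdown_summable :
      Summable fun n => lamr b p * transferDown a p n - lamr b q * transferDown a q n :=
    ((summable_transferDown a hp.summable).mul_left _).sub
      ((summable_transferDown a hq.summable).mul_left _)
  have hup_summable :
      Summable fun n => lamg a p * transferUp b p n - lamg a q * transferUp b q n :=
    ((summable_transferUp b hp.summable).mul_left _).sub
      ((summable_transferUp b hq.summable).mul_left _)
  calc ∑' n, |Lop a b p n - Lop a b q n|
      = ∑' n, |(lamr b p * transferDown a p n - lamr b q * transferDown a q n)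
          + (lamg a p * transferUp b p n - lamg a q * transferUp b q n)| := by
        simp only [Lop_eq, add_sub_add_comm]
    _ ≤ 4 * ∑' n, |p n - q n| + 4 * ∑' n, |p n - q n| :=
        (tsum_abs_add_le hdown_summable hup_summable).trans (add_le_add hdown hup)
    _ = 8 * ∑' n, |p n - q n| := by ring

theorem Lop_lipschitz (a b : ℕ) (hab : a < b) (p q : ℕ → ℝ)
    (hp0 : ∀ n, 0 ≤ p n) (hq0 : ∀ n, 0 ≤ q n)
    (hp : HasSum p 1) (hq : HasSum q 1) :
    (∑' n : ℕ, |Lop a b p n - Lop a b q n|) ≤ 8 * ∑' n : ℕ, |p n - q n| :=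
  Lop_lipschitz_general a b p q hp0 hq0 hp hq
end
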